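/- Let α: ℝ⁶ → M₄(ℝ) be given by α(x₁,…,x₆) = the strictly lower triangular matrix with rows (0,0,0,0), (x₃,0,0,0), (x₁,x₄,0,0), (x₂,x₅,x₆,0), and let κ(x,y) = −(x₁y₄−x₄y₁)E₄₃. Define S⁰ = {v ∈ ℝ⁴ : κ(x,y)v = 0 for all x,y} and inductively Sᵏ = {v ∈ Sᵏ⁻¹ : α(x)v ∈ Sᵏ⁻¹ for all x}. Then S⁰ = {(v₁,v₂,0,v₄)}, S¹ = {(0,0,0,v₄) : v₄ ∈ ℝ}, and Sᵏ = S¹ for all k ≥ 1; in particular the stable solution set S^∞ is the one-dimensional subspace spanned by (0,0,0,1). -/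

import Mathlib

open Matrix

noncomputable section

/-- The extension α of the homogeneous path geometry. -/
def α6 (x : Fin 6 → ℝ) : Matrix (Fin 4) (Fin 4) ℝ :=
  !![0, 0, 0, 0;
     x 2, 0, 0, 0;
     x 0, x 3, 0, 0;
     x 1, x 4, x 5, 0]

/-- Its curvature κ(x,y) = −(x₁y₄ − x₄y₁)E₄₃. -/
def κ6 (x y : Fin 6 → ℝ) : Matrix (Fin 4) (Fin 4) ℝ :=
  (-(x 0 * y 3 - x 3 * y 0)) • Matrix.single (3 : Fin 4) (2 : Fin 4) (1 : ℝ)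

/-- The sets S⁰ ⊇ S¹ ⊇ S² ⊇ ⋯ computing the solution space. -/
def S13 : ℕ → Set (Fin 4 → ℝ)
  | 0 => {v | ∀ x y : Fin 6 → ℝ, (κ6 x y).mulVec v = 0}
  | (k + 1) => {v | v ∈ S13 k ∧ ∀ x : Fin 6 → ℝ, (α6 x).mulVec v ∈ S13 k}


/-! The curvature only sees `v 2`, so `S⁰` is the hyperplane `v 2 = 0`. Testing `α` on the
first and fourth coordinate directions kills `v 0` and `v 1`, and since the last column of
every `α x` vanishes, `α x` annihilates `S¹`; hence `S¹` is a fixed point of the step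
`T ↦ {v ∈ T | α x v ∈ T ∀ x}` and the sequence is constant from `k = 1` on. -/

lemma κ6_mulVec (x y : Fin 6 → ℝ) (v : Fin 4 → ℝ) :
    κ6 x y *ᵥ v = ![0, 0, 0, -(x 0 * y 3 - x 3 * y 0) * v 2] := by
  ext i
  fin_cases i <;> simp [κ6, mulVec, dotProduct, Matrix.single]

lemma α6_mulVec (x : Fin 6 → ℝ) (v : Fin 4 → ℝ) :
    α6 x *ᵥ v = ![0, x 2 * v 0, x 0 * v 0 + x 3 * v 1, x 1 * v 0 + x 4 * v 1 + x 5 * v 2] := by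
  ext i
  fin_cases i <;> simp [α6, mulVec, dotProduct, Fin.sum_univ_four]

lemma α6_mulVec_eq_zero {v : Fin 4 → ℝ} (h0 : v 0 = 0) (h1 : v 1 = 0) (h2 : v 2 = 0)
    (x : Fin 6 → ℝ) : α6 x *ᵥ v = 0 := by
  rw [α6_mulVec, h0, h1, h2]
  ext i
  fin_cases i <;> simp

def solStep (T : Set (Fin 4 → ℝ)) : Set (Fin 4 → ℝ) :=
  {v | v ∈ T ∧ ∀ x : Fin 6 → ℝ, α6 x *ᵥ v ∈ T}

lemma S13_succ (k : ℕ) : S13 (k + 1) = solStep (S13 k) := rfl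

lemma S13_eq_iterate (k : ℕ) : S13 k = solStep^[k] (S13 0) := by
  induction k with
  | zero => rfl
  | succ k ih => rw [Function.iterate_succ_apply', ← ih, S13_succ]

lemma S13_zero : S13 0 = {v | v 2 = 0} := by
  ext v
  simp only [S13, κ6_mulVec, Set.mem_ofPred_eq]
  constructor
  · intro h
    simpa using congrFun (h (Pi.single 0 1) (Pi.single 3 1)) 3
  · intro h x y
    simp [h]

lemma S13_one : S13 1 = {v | v 0 = 0 ∧ v 1 = 0 ∧ v 2 = 0} := by
  ext v
  simp only [S13_succ, solStep, S13_zero, Set.mem_ofPred_eq, α6_mulVec]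
  constructor
  · rintro ⟨h2, h⟩
    have h0 : v 0 = 0 := by simpa using h (Pi.single 0 1)
    have h1 : v 1 = 0 := by simpa using h (Pi.single 3 1)
    exact ⟨h0, h1, h2⟩
  · rintro ⟨h0, h1, h2⟩
    exact ⟨h2, fun x => by simp [h0, h1]⟩

lemma isFixedPt_solStep_S13_one : Function.IsFixedPt solStep (S13 1) := by
  rw [S13_one]
  ext v
  constructor
  · exact And.left
  · intro hv
    refine ⟨hv, fun x => ?_⟩
    rw [α6_mulVec_eq_zero hv.1 hv.2.1 hv.2.2]
    simp

theorem stmt13 :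
    S13 0 = {v | v 2 = 0} ∧
    S13 1 = {v | v 0 = 0 ∧ v 1 = 0 ∧ v 2 = 0} ∧
    (∀ k : ℕ, 1 ≤ k → S13 k = S13 1) := by
  refine ⟨S13_zero, S13_one, fun k hk => ?_⟩
  obtain ⟨n, rfl⟩ := Nat.exists_eq_add_of_le' hk
  rw [S13_eq_iterate, Function.iterate_succ_apply, ← S13_succ]
  exact isFixedPt_solStep_S13_one.iterate n
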